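/- Let C be a small ℂ-linear category and let φ ∈ CN^r(C) be the character of an r-dimensional cycle (S, ∂̂, T̂, ρ) over C. Define ψ ∈ CN^{r+1}(C) by ψ(f⁰⊗…⊗f^{r+1}) := Σ_{j=1}^{r+1} (−1)^{j−1} T̂(ρ(f⁰)∘∂̂ρ(f¹)∘…∘∂̂ρ(f^{j−1})∘ρ(f^j)∘∂̂ρ(f^{j+1})∘…∘∂̂ρ(f^{r+1})), and define Sφ ∈ CN^{r+2}(C) (the image of φ under the periodicity operator) by (Sφ)(f⁰⊗…⊗f^{r+2}) := Σ_{j=1}^{r+1} T̂(ρ(f⁰)∘∂̂ρ(f¹)∘…∘∂̂ρ(f^{j−1})∘ρ(f^j f^{j+1})∘∂̂ρ(f^{j+2})∘…∘∂̂ρ(f^{r+2})). Then Sφ = bψ; in particular Sφ is a Hochschild coboundary. -/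

import Mathlib

open CategoryTheory

noncomputable section

namespace CFM

universe v u u₁ v₁

variable (C : Type u) [Category.{v} C]

/-- A composable chain of morphisms `(f⁰, f¹, …, fⁿ)` with `fⁱ : Xᵢ₊₁ ⟶ Xᵢ`;
`Chain C X Y` consists of chains with innermost source `X` and outermost target `Y`;
`f⁰` is the outermost morphism. -/
inductive Chain : C → C → Type (max u v)
  | single : {X Y : C} → (X ⟶ Y) → Chain X Y
  | cons : {X Y Z : C} → (Y ⟶ Z) → Chain X Y → Chain X Z

namespace Chain

variable {C}

/-- Number of morphisms in the chain. -/
def size : {X Y : C} → Chain C X Y → ℕ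
  | _, _, single _ => 1
  | _, _, cons _ c => c.size + 1

theorem one_le_size {X Y : C} (c : Chain C X Y) : 1 ≤ c.size := by
  induction c with
  | single f => simp [size]
  | cons f c ih => simp [size]

/-- Append a morphism at the inner end of a chain. -/
def snoc : {V X Y : C} → Chain C X Y → (V ⟶ X) → Chain C V Y
  | _, _, _, single f, g => cons f (single g)
  | _, _, _, cons f c, g => cons f (snoc c g)

/-- Compose the morphisms in slots `i` and `i+1` of the chain (`fⁱ ∘ fⁱ⁺¹`). -/
def composeAt : {X Y : C} → ℕ → Chain C X Y → Chain C X Y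
  | _, _, _, single f => single f
  | _, _, 0, cons f (single g) => single (g ≫ f)
  | _, _, 0, cons f (cons g c) => cons (g ≫ f) c
  | _, _, (i+1), cons f c => cons f (composeAt i c)

end Chain

/-- A cyclically composable tuple `(f⁰, …, fⁿ)`, i.e. an element of the cyclic nerve:
a chain from some object back to itself. -/
def CycChain := Σ X : C, Chain C X X

/-- A function on the cyclic nerve of `C`; an element of `CN^n(C)` is (the multilinear
extension of) such a function, evaluated on tuples of size `n+1`. -/
def Cochain := CycChain C → ℂ

variable {C}

/-- The inverse cyclic rotation `(f⁰, …, fⁿ) ↦ (f¹, …, fⁿ, f⁰)`. -/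
def rotInv : CycChain C → CycChain C
  | ⟨X, Chain.single f⟩ => ⟨X, Chain.single f⟩
  | ⟨_, Chain.cons f c⟩ => ⟨_, c.snoc f⟩

/-- The cyclic rotation `(f⁰, …, fⁿ) ↦ (fⁿ, f⁰, …, fⁿ⁻¹)`. -/
def rot (t : CycChain C) : CycChain C := rotInv^[t.2.size - 1] t

/-- The (unsigned) cyclic operator: `(τφ)(f⁰⊗…⊗fⁿ) = φ(fⁿ⊗f⁰⊗…⊗fⁿ⁻¹)`. -/
def tauOp (φ : Cochain C) : Cochain C := fun t => φ (rot t)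

/-- The signed cyclic operator `λₙ = (-1)ⁿ τₙ` on `CN^n(C)`. -/
def lamOp (n : ℕ) (φ : Cochain C) : Cochain C := fun t => (-1 : ℂ) ^ n * φ (rot t)

/-- The operator `A = 1 + λₙ + λₙ² + ⋯ + λₙⁿ` on `CN^n(C)`. -/
def AOp (n : ℕ) (φ : Cochain C) : Cochain C :=
  fun t => ∑ k ∈ Finset.range (n + 1), (-1 : ℂ) ^ (n * k) * φ (rot^[k] t)

/-- The Hochschild coboundary `b : CN^n(C) → CN^{n+1}(C)`:
`(bφ)(f⁰⊗…⊗fⁿ⁺¹) = Σᵢ (-1)ⁱ φ(f⁰⊗…⊗fⁱfⁱ⁺¹⊗…⊗fⁿ⁺¹) + (-1)ⁿ⁺¹ φ(fⁿ⁺¹f⁰⊗f¹⊗…⊗fⁿ)`. -/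
def bOp (n : ℕ) (φ : Cochain C) : Cochain C := fun t =>
  (∑ i ∈ Finset.range (n + 1), (-1 : ℂ) ^ i * φ ⟨t.1, Chain.composeAt i t.2⟩) +
    (-1 : ℂ) ^ (n + 1) * φ ⟨(rot t).1, Chain.composeAt 0 (rot t).2⟩

/-- The truncated Hochschild coboundary `b'` (the last, cyclic, face omitted). -/
def b'Op (n : ℕ) (φ : Cochain C) : Cochain C := fun t =>
  ∑ i ∈ Finset.range (n + 1), (-1 : ℂ) ^ i * φ ⟨t.1, Chain.composeAt i t.2⟩

/-- The operator `B₀ : CN^{n+1}(C) → CN^n(C)`: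
`(B₀φ)(f⁰⊗…⊗fⁿ) = φ(id⊗f⁰⊗…⊗fⁿ) - (-1)ⁿ⁺¹ φ(f⁰⊗…⊗fⁿ⊗id)`. -/
def B0Op (n : ℕ) (φ : Cochain C) : Cochain C := fun t =>
  φ ⟨t.1, Chain.cons (𝟙 t.1) t.2⟩ - (-1 : ℂ) ^ (n + 1) * φ ⟨t.1, t.2.snoc (𝟙 t.1)⟩

/-- Connes' operator `B = A ∘ B₀ : CN^{n+1}(C) → CN^n(C)`. -/
def BOp (n : ℕ) (φ : Cochain C) : Cochain C := AOp n (B0Op n φ)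

/-- A differential graded semicategory over ℂ: hom-spaces are non-negatively graded
cochain complexes of ℂ-vector spaces, with a bilinear associative composition that is a
map of complexes (graded Leibniz rule).  Composition carries a proof `i + j = k` to
avoid dependent rewriting of degrees. -/
structure DGSemicat where
  Obj : Type u₁
  Hom : Obj → Obj → ℕ → Type v₁
  [acg : ∀ X Y n, AddCommGroup (Hom X Y n)]
  [mod : ∀ X Y n, Module ℂ (Hom X Y n)]
  comp : ∀ {X Y Z : Obj} {i j k : ℕ}, i + j = k → Hom Y Z i → Hom X Y j → Hom X Z k
  comp_add_left : ∀ {X Y Z : Obj} {i j k : ℕ} (h : i + j = k) (g g' : Hom Y Z i)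
    (f : Hom X Y j), comp h (g + g') f = comp h g f + comp h g' f
  comp_add_right : ∀ {X Y Z : Obj} {i j k : ℕ} (h : i + j = k) (g : Hom Y Z i)
    (f f' : Hom X Y j), comp h g (f + f') = comp h g f + comp h g f'
  comp_smul_left : ∀ {X Y Z : Obj} {i j k : ℕ} (h : i + j = k) (a : ℂ) (g : Hom Y Z i)
    (f : Hom X Y j), comp h (a • g) f = a • comp h g f
  comp_smul_right : ∀ {X Y Z : Obj} {i j k : ℕ} (h : i + j = k) (a : ℂ) (g : Hom Y Z i)
    (f : Hom X Y j), comp h g (a • f) = a • comp h g f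
  comp_assoc : ∀ {W X Y Z : Obj} {i j k s t u : ℕ}
    (h₁ : i + j = s) (h₂ : s + k = t) (h₃ : j + k = u) (h₄ : i + u = t)
    (g : Hom Y Z i) (f : Hom X Y j) (e : Hom W X k),
    comp h₂ (comp h₁ g f) e = comp h₄ g (comp h₃ f e)
  d : ∀ {X Y : Obj} {n : ℕ}, Hom X Y n → Hom X Y (n + 1)
  d_add : ∀ {X Y : Obj} {n : ℕ} (f g : Hom X Y n), d (f + g) = d f + d g
  d_smul : ∀ {X Y : Obj} {n : ℕ} (a : ℂ) (f : Hom X Y n), d (a • f) = a • d f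
  d_sq : ∀ {X Y : Obj} {n : ℕ} (f : Hom X Y n), d (d f) = 0
  leibniz : ∀ {X Y Z : Obj} {i j k : ℕ} (h : i + j = k) (h₁ : (i + 1) + j = k + 1)
    (h₂ : i + (j + 1) = k + 1) (g : Hom Y Z i) (f : Hom X Y j),
    d (comp h g f) = comp h₁ (d g) f + ((-1 : ℂ) ^ i) • comp h₂ g (d f)

attribute [instance] DGSemicat.acg DGSemicat.mod

/-- An `r`-dimensional cycle `(S, ∂̂, T̂, ρ)` over a small ℂ-linear category `C`:
a DG-semicategory `S` whose degree-0 part is an ordinary category (with identities `one`),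
an `r`-dimensional closed graded trace `tr`, and a ℂ-linear semifunctor `ρ : C → S⁰`. -/
structure CycleOver.{u', v', u₁', v₁'} (C : Type u') [Category.{v'} C] [Preadditive C]
    [CategoryTheory.Linear ℂ C] (r : ℕ) where
  S : DGSemicat.{u₁', v₁'}
  one : ∀ X, S.Hom X X 0
  one_comp : ∀ {X Y} (f : S.Hom X Y 0), S.comp rfl (one Y) f = f
  comp_one : ∀ {X Y} (f : S.Hom X Y 0), S.comp rfl f (one X) = f
  tr : ∀ X, S.Hom X X r →ₗ[ℂ] ℂ
  tr_closed : ∀ {X : S.Obj} {k : ℕ} (hk : k + 1 = r) (f : S.Hom X X k),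
    tr X (hk ▸ S.d f) = 0
  tr_graded : ∀ {X Y : S.Obj} {i j : ℕ} (h : i + j = r) (h' : j + i = r)
    (g : S.Hom Y X i) (g' : S.Hom X Y j),
    tr X (S.comp h g g') = ((-1 : ℂ) ^ (i * j)) * tr Y (S.comp h' g' g)
  ρObj : C → S.Obj
  ρMap : ∀ {X Y : C}, (X ⟶ Y) → S.Hom (ρObj X) (ρObj Y) 0
  ρMap_comp : ∀ {X Y Z : C} (f : X ⟶ Y) (g : Y ⟶ Z),
    ρMap (f ≫ g) = S.comp rfl (ρMap g) (ρMap f)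
  ρMap_add : ∀ {X Y : C} (f g : X ⟶ Y), ρMap (f + g) = ρMap f + ρMap g
  ρMap_smul : ∀ {X Y : C} (a : ℂ) (f : X ⟶ Y), ρMap (a • f) = a • ρMap f

variable {C : Type u} [Category.{v} C] [Preadditive C] [CategoryTheory.Linear ℂ C] {r : ℕ}

/-- Transport a homogeneous morphism along an equality of degrees. -/
def degCast {S : DGSemicat.{u₁', v₁'}} {X Y : S.Obj} {a b : ℕ} (h : a = b)
    (f : S.Hom X Y a) : S.Hom X Y b := h ▸ f

/-- `∂̂ρ(f⁰) ∘ ∂̂ρ(f¹) ∘ ⋯ ∘ ∂̂ρ(fⁿ)` along a chain (an element of degree `size`). -/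
def prodD (Z : CycleOver.{u, v, u₁, v₁} C r) :
    (X Y : C) → (c : Chain C X Y) → Z.S.Hom (Z.ρObj X) (Z.ρObj Y) c.size
  | _, _, Chain.single f => degCast (by simp only [Chain.size]) (Z.S.d (Z.ρMap f))
  | _, _, Chain.cons f c => Z.S.comp (by simp only [Chain.size]; omega)
      (Z.S.d (Z.ρMap f)) (prodD Z _ _ c)

/-- `ρ(f⁰) ∘ ∂̂ρ(f¹) ∘ ⋯ ∘ ∂̂ρ(fⁿ)` along a chain (degree `size - 1`). -/
def charEl (Z : CycleOver.{u, v, u₁, v₁} C r) :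
    (X Y : C) → (c : Chain C X Y) → Z.S.Hom (Z.ρObj X) (Z.ρObj Y) (c.size - 1)
  | _, _, Chain.single f => degCast (by simp only [Chain.size]) (Z.ρMap f)
  | _, _, Chain.cons f c => Z.S.comp (by simp only [Chain.size]; omega)
      (Z.ρMap f) (prodD Z _ _ c)

/-- `∂̂ρ(f⁰) ⋯ ρ(fʲ) ⋯ ∂̂ρ(fⁿ)`: all slots differentiated except slot `j`
(degree `size - 1`). -/
def prodDExcept (Z : CycleOver.{u, v, u₁, v₁} C r) :
    (X Y : C) → (c : Chain C X Y) → ℕ → Z.S.Hom (Z.ρObj X) (Z.ρObj Y) (c.size - 1)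
  | _, _, Chain.single f, _ => degCast (by simp only [Chain.size]) (Z.ρMap f)
  | _, _, Chain.cons f c, 0 => Z.S.comp (by simp only [Chain.size]; omega)
      (Z.ρMap f) (prodD Z _ _ c)
  | _, _, Chain.cons f c, (j+1) => Z.S.comp
      (by simp only [Chain.size]; have := Chain.one_le_size c; omega)
      (Z.S.d (Z.ρMap f)) (prodDExcept Z _ _ c j)

/-- `ρ(f⁰) ∂̂ρ(f¹) ⋯ ρ(fʲ) ⋯ ∂̂ρ(fⁿ)`: slot `0` and slot `j` undifferentiated, all other
slots differentiated (degree `size - 2`). -/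
def psiEl (Z : CycleOver.{u, v, u₁, v₁} C r) :
    (X Y : C) → (c : Chain C X Y) → ℕ → Z.S.Hom (Z.ρObj X) (Z.ρObj Y) (c.size - 2)
  | _, _, Chain.single f, _ => degCast (by simp only [Chain.size]) (Z.ρMap f)
  | _, _, Chain.cons f c, j => Z.S.comp (by simp only [Chain.size]; omega)
      (Z.ρMap f) (prodDExcept Z _ _ c (j - 1))

/-- The character `φ ∈ CN^r(C)` of an `r`-dimensional cycle:
`φ(f⁰⊗…⊗f^r) = T̂(ρ(f⁰) ∂̂ρ(f¹) ⋯ ∂̂ρ(f^r))`. -/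
noncomputable def charCochain (Z : CycleOver.{u, v, u₁, v₁} C r) : Cochain C := fun t =>
  if h : t.2.size - 1 = r then Z.tr (Z.ρObj t.1) (h ▸ charEl Z _ _ t.2) else 0

/-- `T̂(ρ(f⁰) ∂̂ρ(f¹) ⋯ ρ(fʲ) ⋯ ∂̂ρ(fⁿ))` (defined when the degree matches `r`). -/
noncomputable def trPsi (Z : CycleOver.{u, v, u₁, v₁} C r) {X : C} (c : Chain C X X)
    (j : ℕ) : ℂ :=
  if h : c.size - 2 = r then Z.tr (Z.ρObj X) (h ▸ psiEl Z _ _ c j) else 0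

/-- The cochain `ψ ∈ CN^{r+1}(C)` of Proposition `S(φ) = bψ`:
`ψ(f⁰⊗…⊗f^{r+1}) = Σ_{j=1}^{r+1} (-1)^{j-1} T̂(ρ(f⁰)∂̂ρ(f¹)⋯ρ(fʲ)⋯∂̂ρ(f^{r+1}))`. -/
noncomputable def psiCochain (Z : CycleOver.{u, v, u₁, v₁} C r) : Cochain C := fun t =>
  ∑ j ∈ Finset.Icc 1 (r + 1), (-1 : ℂ) ^ (j - 1) * trPsi Z t.2 j

/-- The image `Sφ ∈ CN^{r+2}(C)` of the character `φ` of an `r`-dimensional cycle under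
the periodicity operator:
`(Sφ)(f⁰⊗…⊗f^{r+2}) = Σ_{j=1}^{r+1} T̂(ρ(f⁰)∂̂ρ(f¹)⋯∂̂ρ(f^{j-1}) ρ(fʲf^{j+1}) ∂̂ρ(f^{j+2})⋯∂̂ρ(f^{r+2}))`. -/
noncomputable def SCochain (Z : CycleOver.{u, v, u₁, v₁} C r) : Cochain C := fun t =>
  ∑ j ∈ Finset.Icc 1 (r + 1), trPsi Z (Chain.composeAt j t.2) j

end CFM

/-!
Write `Q(p, q)` for `T̂` applied to `ρ(f⁰) ∂̂ρ(f¹) ⋯ ∂̂ρ(f^{r+2})` with `ρ` instead of `∂̂ρ` in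
the slots `p < q` as well. The Leibniz rule `∂̂ρ(fⁱfⁱ⁺¹) = ∂̂ρ(fⁱ)ρ(fⁱ⁺¹) + ρ(fⁱ)∂̂ρ(fⁱ⁺¹)`
turns each face of each summand of `ψ` into one or two values of `Q`; for the cyclic face,
the degree-`0` factor `ρ(f^{r+2})` is first moved around the graded trace, at no sign.
For fixed `j` the alternating sum over the faces then telescopes to `Q(j, j + 1)`, the `j`-th
summand of `Sφ`.
-/

namespace CFM

universe v u u₁ v₁

section Chains

variable {C : Type u} [Category.{v} C]

namespace Chain

@[simp] theorem size_single {X Y : C} (f : X ⟶ Y) : (single f).size = 1 := by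
  simp [size]

@[simp] theorem size_cons {X Y Z : C} (f : Y ⟶ Z) (c : Chain C X Y) :
    (cons f c).size = c.size + 1 := by
  simp [size]

@[simp] theorem snoc_single {V X Y : C} (f : X ⟶ Y) (g : V ⟶ X) :
    (single f).snoc g = cons f (single g) := by
  simp [snoc]

@[simp] theorem snoc_cons {V X Y Z : C} (f : Y ⟶ Z) (c : Chain C X Y) (g : V ⟶ X) :
    (cons f c).snoc g = cons f (c.snoc g) := by
  simp [snoc]

@[simp] theorem composeAt_succ_cons {X Y Z : C} (i : ℕ) (f : Y ⟶ Z) (c : Chain C X Y) :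
    composeAt (i + 1) (cons f c) = cons f (composeAt i c) := by
  cases c <;> simp [composeAt]

@[simp] theorem size_snoc {V X Y : C} (c : Chain C X Y) (g : V ⟶ X) :
    (c.snoc g).size = c.size + 1 := by
  induction c with
  | single f => simp
  | cons f c ih => simp [ih]

theorem size_composeAt {X Y : C} (c : Chain C X Y) {i : ℕ} (h : i + 2 ≤ c.size) :
    (composeAt i c).size + 1 = c.size := by
  induction c generalizing i with
  | single f => simp at h
  | cons f c ih =>
    match i, c with
    | 0, single g => simp [composeAt]
    | 0, cons g c' => simp [composeAt]
    | i + 1, c => simp [ih (i := i) (by simp at h; omega)]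

theorem exists_eq_snoc {X Y : C} (c : Chain C X Y) (h : 2 ≤ c.size) :
    ∃ (W : C) (c' : Chain C W Y) (g : X ⟶ W), c = c'.snoc g := by
  induction c with
  | single f => simp at h
  | cons f c ih =>
    match c, ih with
    | single g, _ => exact ⟨_, single f, g, by simp⟩
    | cons g c', ih =>
      obtain ⟨W, c'', g', he⟩ := ih (by simp; have := c'.one_le_size; omega)
      exact ⟨W, cons f c'', g', by rw [he, snoc_cons]⟩

def append : {X Y Z : C} → Chain C Y Z → Chain C X Y → Chain C X Z
  | _, _, _, single f, d => cons f d
  | _, _, _, cons f c, d => cons f (append c d)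

@[simp] theorem single_append {X Y Z : C} (f : Y ⟶ Z) (d : Chain C X Y) :
    (single f).append d = cons f d := by
  simp [append]

@[simp] theorem cons_append {W X Y Z : C} (f : Y ⟶ Z) (c : Chain C X Y) (d : Chain C W X) :
    (cons f c).append d = cons f (c.append d) := by
  simp [append]

theorem snoc_eq_append {V X Y : C} (c : Chain C X Y) (g : V ⟶ X) :
    c.snoc g = c.append (single g) := by
  induction c with
  | single f => simp
  | cons f c ih => simp [ih]

theorem append_snoc {V W X Y : C} (c : Chain C X Y) (d : Chain C W X) (g : V ⟶ W) :
    (c.append d).snoc g = c.append (d.snoc g) := by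
  induction c with
  | single f => simp
  | cons f c ih => simp [ih]

theorem append_assoc {V W X Y : C} (a : Chain C X Y) (b : Chain C W X) (c : Chain C V W) :
    (a.append b).append c = a.append (b.append c) := by
  induction a with
  | single f => simp
  | cons f a ih => simp [ih]

end Chain

theorem rotInv_cons {X Y : C} (f : Y ⟶ X) (c : Chain C X Y) :
    rotInv (⟨X, Chain.cons f c⟩ : CycChain C) = ⟨Y, c.snoc f⟩ :=
  rfl

theorem rotInv_iterate_append {X Y : C} (c : Chain C Y X) (d : Chain C X Y) :
    rotInv^[c.size] (⟨X, c.append d⟩ : CycChain C) = ⟨Y, d.append c⟩ := by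
  induction c with
  | single f =>
    simp only [Chain.size_single, Function.iterate_one, Chain.single_append]
    rw [rotInv_cons, Chain.snoc_eq_append]
  | cons f c ih =>
    simp only [Chain.size_cons, Chain.cons_append]
    change rotInv^[c.size] (rotInv ⟨_, Chain.cons f (c.append d)⟩) = _
    rw [rotInv_cons, Chain.append_snoc, Chain.snoc_eq_append, ih, Chain.append_assoc,
      Chain.single_append]

theorem rot_snoc {V W : C} (c : Chain C W V) (g : V ⟶ W) :
    rot (⟨V, c.snoc g⟩ : CycChain C) = ⟨W, Chain.cons g c⟩ := by
  change rotInv^[(c.snoc g).size - 1] _ = _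
  rw [Chain.size_snoc, Nat.add_sub_cancel, Chain.snoc_eq_append, rotInv_iterate_append,
    Chain.single_append]

end Chains

section HEqCongr

variable {S : DGSemicat.{u₁, v₁}}

theorem degCast_heq {X Y : S.Obj} {a b : ℕ} (h : a = b) (f : S.Hom X Y a) :
    HEq (degCast h f) f := by
  subst h; rfl

theorem comp_heq_comp {X Y Z : S.Obj} {i i' j j' k k' : ℕ} (h : i + j = k)
    (h' : i' + j' = k') (hi : i = i') (hj : j = j') {g : S.Hom Y Z i} {g' : S.Hom Y Z i'}
    {f : S.Hom X Y j} {f' : S.Hom X Y j'} (hg : HEq g g') (hf : HEq f f') :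
    HEq (S.comp h g f) (S.comp h' g' f') := by
  subst hi hj
  obtain rfl : k = k' := h.symm.trans h'
  cases hg; cases hf; rfl

theorem add_heq_add {X Y : S.Obj} {a b : ℕ} (hab : a = b) {x y : S.Hom X Y a}
    {x' y' : S.Hom X Y b} (hx : HEq x x') (hy : HEq y y') : HEq (x + y) (x' + y') := by
  subst hab; cases hx; cases hy; rfl

theorem comp_assoc_heq {W X Y Z : S.Obj} {i j k s u t t' : ℕ}
    (h₁ : i + j = s) (h₂ : s + k = t) (h₃ : j + k = u) (h₄ : i + u = t')
    (g : S.Hom Y Z i) (f : S.Hom X Y j) (e : S.Hom W X k) :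
    HEq (S.comp h₂ (S.comp h₁ g f) e) (S.comp h₄ g (S.comp h₃ f e)) := by
  obtain rfl : t = t' := by omega
  exact heq_of_eq (S.comp_assoc h₁ h₂ h₃ h₄ g f e)

theorem DGSemicat.d_comp_of_deg_zero {X Y Z : S.Obj} (g : S.Hom Y Z 0) (f : S.Hom X Y 0) :
    S.d (S.comp rfl g f) = S.comp rfl (S.d g) f + S.comp rfl g (S.d f) := by
  rw [S.leibniz (i := 0) (j := 0) rfl rfl rfl, pow_zero, one_smul]

end HEqCongr

section Products

variable {C : Type u} [Category.{v} C] [Preadditive C] [CategoryTheory.Linear ℂ C] {r : ℕ}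
  (Z : CycleOver.{u, v, u₁, v₁} C r)

/-- `∂̂ρ(f⁰) ⋯ ρ(fᵖ) ⋯ ρ(f^q) ⋯ ∂̂ρ(fⁿ)` for `p < q`; `0` when `p` is out of range. -/
def prodDExcept₂ :
    (X Y : C) → (c : Chain C X Y) → ℕ → ℕ → Z.S.Hom (Z.ρObj X) (Z.ρObj Y) (c.size - 2)
  | _, _, Chain.single _, _, _ => 0
  | _, _, Chain.cons f c, 0, q => Z.S.comp (by simp only [Chain.size]; omega)
      (Z.ρMap f) (prodDExcept Z _ _ c (q - 1))
  | _, _, Chain.cons _ (Chain.single _), _ + 1, _ => 0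
  | _, _, Chain.cons f (Chain.cons g c), p + 1, q =>
      Z.S.comp (by simp only [Chain.size]; have := Chain.one_le_size c; omega)
        (Z.S.d (Z.ρMap f)) (prodDExcept₂ _ _ (Chain.cons g c) p (q - 1))

/-- `ρ(f⁰) ∂̂ρ(f¹) ⋯ ρ(fᵖ) ⋯ ρ(f^q) ⋯ ∂̂ρ(fⁿ)` for `1 ≤ p < q`. -/
def psiEl₂ :
    (X Y : C) → (c : Chain C X Y) → ℕ → ℕ → Z.S.Hom (Z.ρObj X) (Z.ρObj Y) (c.size - 3)
  | _, _, Chain.single _, _, _ => 0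
  | _, _, Chain.cons f c, p, q => Z.S.comp (by simp only [Chain.size]; omega)
      (Z.ρMap f) (prodDExcept₂ Z _ _ c (p - 1) (q - 1))

noncomputable def trPsi₂ {X : C} (c : Chain C X X) (p q : ℕ) : ℂ :=
  if h : c.size - 3 = r then Z.tr (Z.ρObj X) (h ▸ psiEl₂ Z _ _ c p q) else 0

theorem prodD_composeAt {X Y : C} (c : Chain C X Y) {i : ℕ} (h : i + 2 ≤ c.size) :
    HEq (prodD Z X Y (c.composeAt i))
      (prodDExcept Z X Y c (i + 1) + prodDExcept Z X Y c i) := by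
  induction i generalizing X Y with
  | zero =>
    match c with
    | Chain.single f => simp at h
    | Chain.cons f (Chain.single g) =>
      simp only [Chain.composeAt, prodD, prodDExcept]
      refine (degCast_heq _ _).trans ?_
      rw [Z.ρMap_comp, Z.S.d_comp_of_deg_zero]
      exact add_heq_add (by simp)
        (comp_heq_comp _ _ rfl (by simp) HEq.rfl (degCast_heq _ _).symm)
        (comp_heq_comp _ _ rfl (by simp) HEq.rfl (degCast_heq _ _).symm)
    | Chain.cons f (Chain.cons g c') =>
      simp only [Chain.composeAt, prodD, prodDExcept]
      rw [Z.ρMap_comp, Z.S.d_comp_of_deg_zero, Z.S.comp_add_left]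
      exact add_heq_add (by simp) (comp_assoc_heq _ _ _ _ _ _ _)
        (comp_assoc_heq _ _ _ _ _ _ _)
  | succ i ih =>
    match c with
    | Chain.single f => simp at h
    | Chain.cons f c' =>
      have h' : i + 2 ≤ c'.size := by simp at h; omega
      rw [Chain.composeAt_succ_cons]
      simp only [prodD, prodDExcept]
      rw [← Z.S.comp_add_right]
      exact comp_heq_comp _ _ rfl (by have := c'.size_composeAt h'; omega) HEq.rfl (ih c' h')

theorem prodDExcept_composeAt_of_lt {X Y : C} (c : Chain C X Y) {i j : ℕ} (hij : i < j)
    (hj : j + 2 ≤ c.size) :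
    HEq (prodDExcept Z X Y (c.composeAt i) j)
      (prodDExcept₂ Z X Y c (i + 1) (j + 1) + prodDExcept₂ Z X Y c i (j + 1)) := by
  induction i generalizing X Y j with
  | zero =>
    obtain ⟨j, rfl⟩ : ∃ k, j = k + 1 := ⟨j - 1, by omega⟩
    match c with
    | Chain.single f => simp at hj
    | Chain.cons f (Chain.single g) => simp at hj
    | Chain.cons f (Chain.cons g c') =>
      simp only [Chain.composeAt, prodDExcept, prodDExcept₂, Nat.add_sub_cancel]
      rw [Z.ρMap_comp, Z.S.d_comp_of_deg_zero, Z.S.comp_add_left]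
      exact add_heq_add (by simp) (comp_assoc_heq _ _ _ _ _ _ _)
        (comp_assoc_heq _ _ _ _ _ _ _)
  | succ i ih =>
    obtain ⟨j, rfl⟩ : ∃ k, j = k + 1 := ⟨j - 1, by omega⟩
    match c with
    | Chain.single f => simp at hj
    | Chain.cons f (Chain.single g) => simp at hj
    | Chain.cons f (Chain.cons g c') =>
      have hj' : j + 2 ≤ (Chain.cons g c').size := by simp at hj ⊢; omega
      rw [Chain.composeAt_succ_cons]
      simp only [prodDExcept, prodDExcept₂, Nat.add_sub_cancel]
      rw [← Z.S.comp_add_right]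
      refine comp_heq_comp _ _ rfl ?_ HEq.rfl (ih (Chain.cons g c') (by omega) hj')
      have := Chain.size_composeAt (Chain.cons g c') (i := i) (by omega)
      omega

theorem prodDExcept_composeAt_self {X Y : C} (c : Chain C X Y) {j : ℕ}
    (hj : j + 2 ≤ c.size) :
    HEq (prodDExcept Z X Y (c.composeAt j) j) (prodDExcept₂ Z X Y c j (j + 1)) := by
  induction j generalizing X Y with
  | zero =>
    match c with
    | Chain.single f => simp at hj
    | Chain.cons f (Chain.single g) =>
      simp only [Chain.composeAt, prodDExcept, prodDExcept₂, Nat.add_sub_cancel]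
      refine (degCast_heq _ _).trans ?_
      rw [Z.ρMap_comp]
      exact comp_heq_comp _ _ rfl (by simp) HEq.rfl (degCast_heq _ _).symm
    | Chain.cons f (Chain.cons g c') =>
      simp only [Chain.composeAt, prodDExcept, prodDExcept₂, Nat.add_sub_cancel]
      rw [Z.ρMap_comp]
      exact comp_assoc_heq _ _ _ _ _ _ _
  | succ j ih =>
    match c with
    | Chain.single f => simp at hj
    | Chain.cons f (Chain.single g) => simp at hj
    | Chain.cons f (Chain.cons g c') =>
      have hj' : j + 2 ≤ (Chain.cons g c').size := by simp at hj ⊢; omega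
      rw [Chain.composeAt_succ_cons]
      simp only [prodDExcept, prodDExcept₂, Nat.add_sub_cancel]
      refine comp_heq_comp _ _ rfl ?_ HEq.rfl (ih (Chain.cons g c') hj')
      have := Chain.size_composeAt (Chain.cons g c') hj'
      omega

theorem prodDExcept_composeAt_of_gt {X Y : C} (c : Chain C X Y) {i j : ℕ} (hji : j < i)
    (hi : i + 2 ≤ c.size) :
    HEq (prodDExcept Z X Y (c.composeAt i) j)
      (prodDExcept₂ Z X Y c j (i + 1) + prodDExcept₂ Z X Y c j i) := by
  obtain ⟨i, rfl⟩ : ∃ k, i = k + 1 := ⟨i - 1, by omega⟩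
  induction j generalizing X Y i with
  | zero =>
    match c with
    | Chain.single f => simp at hi
    | Chain.cons f c' =>
      have hi' : i + 2 ≤ c'.size := by simp at hi; omega
      rw [Chain.composeAt_succ_cons]
      simp only [prodDExcept, prodDExcept₂, Nat.add_sub_cancel]
      rw [← Z.S.comp_add_right]
      exact comp_heq_comp _ _ rfl (by have := c'.size_composeAt hi'; omega) HEq.rfl
        (prodD_composeAt Z c' hi')
  | succ j ih =>
    obtain ⟨i, rfl⟩ : ∃ k, i = k + 1 := ⟨i - 1, by omega⟩
    match c with
    | Chain.single f => simp at hi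
    | Chain.cons f (Chain.single g) => simp at hi
    | Chain.cons f (Chain.cons g c') =>
      have hi' : i + 1 + 2 ≤ (Chain.cons g c').size := by simp at hi ⊢; omega
      rw [Chain.composeAt_succ_cons]
      simp only [prodDExcept, prodDExcept₂, Nat.add_sub_cancel]
      rw [← Z.S.comp_add_right]
      refine comp_heq_comp _ _ rfl ?_ HEq.rfl (ih (Chain.cons g c') i (by omega) hi')
      have := Chain.size_composeAt (Chain.cons g c') hi'
      omega

theorem prodDExcept_snoc_size {V X Y : C} (c : Chain C X Y) (g : V ⟶ X) :
    HEq (prodDExcept Z V Y (c.snoc g) c.size)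
      (Z.S.comp (rfl : c.size + 0 = c.size + 0) (prodD Z X Y c) (Z.ρMap g)) := by
  induction c with
  | single f =>
    rw [Chain.snoc_single]
    conv_lhs => rw [Chain.size_single]
    simp only [prodDExcept, prodD]
    exact comp_heq_comp _ _ (by simp) (by simp) (degCast_heq _ _).symm (degCast_heq _ _)
  | cons f c' ih =>
    rw [Chain.snoc_cons]
    conv_lhs => rw [Chain.size_cons]
    simp only [prodDExcept, prodD]
    refine (comp_heq_comp _ (rfl : (0 + 1) + (c'.size + 0) = _) rfl ?_ HEq.rfl ih).trans
      (comp_assoc_heq _ _ _ _ _ _ _).symm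
    simp

theorem prodDExcept₂_cons_succ {X Y W : C} (f : Y ⟶ W) (c : Chain C X Y) {p q : ℕ}
    (hc : 2 ≤ c.size) :
    HEq (prodDExcept₂ Z X W (Chain.cons f c) (p + 1) q)
      (Z.S.comp (rfl : (0 + 1) + (c.size - 2) = _) (Z.S.d (Z.ρMap f))
        (prodDExcept₂ Z X Y c p (q - 1))) := by
  match c with
  | Chain.single _ => simp at hc
  | Chain.cons g c' =>
    simp only [prodDExcept₂]
    exact comp_heq_comp _ _ rfl rfl HEq.rfl HEq.rfl

theorem prodDExcept₂_snoc_size {V X Y : C} (c : Chain C X Y) (g : V ⟶ X) {p : ℕ}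
    (hp : p + 1 ≤ c.size) :
    HEq (prodDExcept₂ Z V Y (c.snoc g) p c.size)
      (Z.S.comp (rfl : (c.size - 1) + 0 = (c.size - 1) + 0)
        (prodDExcept Z X Y c p) (Z.ρMap g)) := by
  induction c generalizing p with
  | single f =>
    obtain rfl : p = 0 := by simp at hp; omega
    rw [Chain.snoc_single]
    simp only [prodDExcept₂, prodDExcept]
    exact comp_heq_comp _ _ (by simp) (by simp) (degCast_heq _ _).symm (degCast_heq _ _)
  | cons f c' ih =>
    rw [Chain.snoc_cons]
    match p, hp with
    | 0, _ =>
      simp only [prodDExcept₂, prodDExcept]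
      conv_lhs => rw [show (Chain.cons f c').size - 1 = c'.size by simp]
      refine (comp_heq_comp _ (rfl : 0 + (c'.size + 0) = _) rfl ?_ HEq.rfl
        (prodDExcept_snoc_size Z c' g)).trans (comp_assoc_heq _ _ _ _ _ _ _).symm
      simp
    | p + 1, hp =>
      have hp' : p + 1 ≤ c'.size := by simp at hp; omega
      refine (prodDExcept₂_cons_succ Z f (c'.snoc g) (by simp; omega)).trans ?_
      conv_lhs => rw [show (Chain.cons f c').size - 1 = c'.size by simp]
      simp only [prodDExcept]
      refine (comp_heq_comp _ (rfl : (0 + 1) + ((c'.size - 1) + 0) = _) rfl ?_ HEq.rfl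
        (ih hp')).trans (comp_assoc_heq _ _ _ _ _ _ _).symm
      simp

theorem trPsi_eq {X : C} (c : Chain C X X) (j : ℕ) (h : c.size - 2 = r)
    (y : Z.S.Hom (Z.ρObj X) (Z.ρObj X) r) (hy : HEq (psiEl Z X X c j) y) :
    trPsi Z c j = Z.tr (Z.ρObj X) y := by
  subst h
  rw [trPsi, dif_pos rfl, eq_of_heq hy]

theorem trPsi₂_eq {X : C} (c : Chain C X X) (p q : ℕ) (h : c.size - 3 = r)
    (y : Z.S.Hom (Z.ρObj X) (Z.ρObj X) r) (hy : HEq (psiEl₂ Z X X c p q) y) :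
    trPsi₂ Z c p q = Z.tr (Z.ρObj X) y := by
  subst h
  rw [trPsi₂, dif_pos rfl, eq_of_heq hy]

theorem trPsi_eq_trPsi₂ {X : C} (c d : Chain C X X) (j p q : ℕ) (h : c.size - 2 = r)
    (h' : d.size - 3 = r) (he : HEq (psiEl Z X X c j) (psiEl₂ Z X X d p q)) :
    trPsi Z c j = trPsi₂ Z d p q := by
  rw [trPsi₂_eq Z d p q h' (degCast h' _) (degCast_heq _ _).symm]
  exact trPsi_eq Z c j h _ (he.trans (degCast_heq _ _).symm)

theorem trPsi_eq_trPsi₂_add {X : C} (c d : Chain C X X) (j p q p' q' : ℕ)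
    (h : c.size - 2 = r) (h' : d.size - 3 = r)
    (he : HEq (psiEl Z X X c j) (psiEl₂ Z X X d p q + psiEl₂ Z X X d p' q')) :
    trPsi Z c j = trPsi₂ Z d p q + trPsi₂ Z d p' q' := by
  rw [trPsi₂_eq Z d p q h' (degCast h' _) (degCast_heq _ _).symm,
    trPsi₂_eq Z d p' q' h' (degCast h' _) (degCast_heq _ _).symm, ← map_add]
  exact trPsi_eq Z c j h _
    (he.trans (add_heq_add h' (degCast_heq _ _).symm (degCast_heq _ _).symm))

theorem trPsi_composeAt_zero {X : C} (ch : Chain C X X) (hs : ch.size = r + 3) (j : ℕ) :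
    trPsi Z (ch.composeAt 0) j = trPsi₂ Z ch 1 (j + 1) := by
  match ch, hs with
  | Chain.single f, hs => simp at hs
  | Chain.cons f (Chain.single g), hs => simp at hs
  | Chain.cons f (Chain.cons g c'), hs =>
    have hc : c'.size = r + 1 := by simp at hs; omega
    simp only [Chain.composeAt]
    refine trPsi_eq_trPsi₂ Z _ _ j 1 (j + 1) (by simp; omega) (by simp; omega) ?_
    simp only [psiEl, psiEl₂, prodDExcept₂, Nat.add_sub_cancel, Nat.sub_self]
    rw [Z.ρMap_comp]
    exact comp_assoc_heq _ _ _ _ _ _ _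

theorem trPsi_composeAt_self {X : C} (ch : Chain C X X) (hs : ch.size = r + 3) {j : ℕ}
    (hj1 : 1 ≤ j) (hj2 : j ≤ r + 1) :
    trPsi Z (ch.composeAt j) j = trPsi₂ Z ch j (j + 1) := by
  obtain ⟨j, rfl⟩ : ∃ k, j = k + 1 := ⟨j - 1, by omega⟩
  match ch, hs with
  | Chain.single f, hs => simp at hs
  | Chain.cons f c, hs =>
    have hc : c.size = r + 2 := by simp at hs; omega
    have hj : j + 2 ≤ c.size := by omega
    have hsz := c.size_composeAt hj
    rw [Chain.composeAt_succ_cons]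
    refine trPsi_eq_trPsi₂ Z _ _ (j + 1) (j + 1) (j + 2) (by simp; omega) (by simp; omega) ?_
    simp only [psiEl, psiEl₂, Nat.add_sub_cancel]
    exact comp_heq_comp _ _ rfl (by omega) HEq.rfl (prodDExcept_composeAt_self Z c hj)

theorem trPsi_composeAt_of_lt {X : C} (ch : Chain C X X) (hs : ch.size = r + 3) {i j : ℕ}
    (hi : 1 ≤ i) (hij : i < j) (hj : j ≤ r + 1) :
    trPsi Z (ch.composeAt i) j = trPsi₂ Z ch (i + 1) (j + 1) + trPsi₂ Z ch i (j + 1) := by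
  obtain ⟨i, rfl⟩ : ∃ k, i = k + 1 := ⟨i - 1, by omega⟩
  obtain ⟨j, rfl⟩ : ∃ k, j = k + 1 := ⟨j - 1, by omega⟩
  match ch, hs with
  | Chain.single f, hs => simp at hs
  | Chain.cons f c, hs =>
    have hc : c.size = r + 2 := by simp at hs; omega
    have hi' : i + 2 ≤ c.size := by omega
    have hsz := c.size_composeAt hi'
    rw [Chain.composeAt_succ_cons]
    refine trPsi_eq_trPsi₂_add Z _ _ (j + 1) (i + 2) (j + 2) (i + 1) (j + 2)
      (by simp; omega) (by simp; omega) ?_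
    simp only [psiEl, psiEl₂, Nat.add_sub_cancel]
    rw [← Z.S.comp_add_right]
    exact comp_heq_comp _ _ rfl (by omega) HEq.rfl
      (prodDExcept_composeAt_of_lt Z c (by omega) (by omega))

theorem trPsi_composeAt_of_gt {X : C} (ch : Chain C X X) (hs : ch.size = r + 3) {i j : ℕ}
    (hj : 1 ≤ j) (hji : j < i) (hi : i ≤ r + 1) :
    trPsi Z (ch.composeAt i) j = trPsi₂ Z ch j (i + 1) + trPsi₂ Z ch j i := by
  obtain ⟨i, rfl⟩ : ∃ k, i = k + 1 := ⟨i - 1, by omega⟩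
  obtain ⟨j, rfl⟩ : ∃ k, j = k + 1 := ⟨j - 1, by omega⟩
  match ch, hs with
  | Chain.single f, hs => simp at hs
  | Chain.cons f c, hs =>
    have hc : c.size = r + 2 := by simp at hs; omega
    have hi' : i + 2 ≤ c.size := by omega
    have hsz := c.size_composeAt hi'
    rw [Chain.composeAt_succ_cons]
    refine trPsi_eq_trPsi₂_add Z _ _ (j + 1) (j + 1) (i + 2) (j + 1) (i + 1)
      (by simp; omega) (by simp; omega) ?_
    simp only [psiEl, psiEl₂, Nat.add_sub_cancel]
    rw [← Z.S.comp_add_right]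
    exact comp_heq_comp _ _ rfl (by omega) HEq.rfl
      (prodDExcept_composeAt_of_gt Z c (by omega) hi')

theorem psiEl_cons_comp {X Y W V : C} (f : Y ⟶ W) (g : W ⟶ V) (c : Chain C X Y) (j : ℕ) :
    HEq (psiEl Z X V (Chain.cons (f ≫ g) c) j)
      (Z.S.comp (rfl : 0 + ((Chain.cons f c).size - 2) = _) (Z.ρMap g)
        (psiEl Z X W (Chain.cons f c) j)) := by
  simp only [psiEl]
  rw [Z.ρMap_comp]
  exact comp_assoc_heq _ _ _ _ _ _ _

theorem psiEl₂_cons_snoc {V X Y W : C} (f : Y ⟶ W) (c : Chain C X Y) (g : V ⟶ X) {j : ℕ}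
    (hj1 : 1 ≤ j) (hj2 : j ≤ c.size) :
    HEq (psiEl₂ Z V W (Chain.cons f (c.snoc g)) j (c.size + 1))
      (Z.S.comp (rfl : ((Chain.cons f c).size - 2) + 0 = _)
        (psiEl Z X W (Chain.cons f c) j) (Z.ρMap g)) := by
  simp only [psiEl₂, psiEl, Nat.add_sub_cancel]
  exact (comp_heq_comp _ (rfl : 0 + ((c.size - 1) + 0) = _) rfl (by simp) HEq.rfl
    (prodDExcept₂_snoc_size Z c g (by omega))).trans (comp_assoc_heq _ _ _ _ _ _ _).symm

theorem trPsi_composeAt_zero_rot (t : CycChain C) (hs : t.2.size = r + 3) {j : ℕ}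
    (hj1 : 1 ≤ j) (hj2 : j ≤ r + 1) :
    trPsi Z ((rot t).2.composeAt 0) j = trPsi₂ Z t.2 j (r + 2) := by
  obtain ⟨V, ch⟩ := t
  obtain ⟨W, d, g, rfl⟩ := ch.exists_eq_snoc (by simp only at hs; omega)
  match d, hs with
  | Chain.single f, hs => simp at hs
  | Chain.cons f c, hs =>
    have hc : c.size = r + 1 := by simp at hs; omega
    rw [rot_snoc]
    change trPsi Z (Chain.composeAt 0 (Chain.cons g (Chain.cons f c))) j =
      trPsi₂ Z ((Chain.cons f c).snoc g) j (r + 2)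
    simp only [Chain.composeAt, Chain.snoc_cons]
    have hdeg : (Chain.cons f c).size - 2 = r := by simp; omega
    rw [trPsi_eq Z _ j (by simp; omega)
        (Z.S.comp (zero_add r) (Z.ρMap g) (degCast hdeg (psiEl Z _ _ (Chain.cons f c) j)))
        ((psiEl_cons_comp Z f g c j).trans
          (comp_heq_comp _ _ rfl hdeg HEq.rfl (degCast_heq hdeg _).symm)),
      Z.tr_graded _ (add_zero r), zero_mul, pow_zero, one_mul,
      show r + 2 = c.size + 1 by omega]
    exact (trPsi₂_eq Z _ j _ (by simp; omega) _
      ((psiEl₂_cons_snoc Z f c g hj1 (by omega)).trans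
        (comp_heq_comp _ _ hdeg rfl (degCast_heq hdeg _).symm HEq.rfl))).symm

end Products

section FaceSums

variable {R : Type*} [CommRing R]

theorem sum_Ico_neg_one_pow_mul_add_succ (g : ℕ → R) {a b : ℕ} (hab : a ≤ b) :
    ∑ i ∈ Finset.Ico a b, (-1 : R) ^ i * (g i + g (i + 1)) =
      (-1) ^ a * g a - (-1) ^ b * g b := by
  have h := Finset.sum_Ico_sub (fun i => (-1 : R) ^ i * g i) hab
  rw [← neg_sub, ← h, ← Finset.sum_neg_distrib]
  refine Finset.sum_congr rfl fun i _ => ?_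
  ring

theorem sum_neg_one_pow_mul_faces_eq (r : ℕ) (Q T : ℕ → ℕ → R) {j : ℕ} (hj1 : 1 ≤ j)
    (hj2 : j ≤ r + 1) (h0 : T 0 j = Q 1 (j + 1))
    (hlt : ∀ i, 1 ≤ i → i < j → T i j = Q (i + 1) (j + 1) + Q i (j + 1))
    (hdiag : T j j = Q j (j + 1))
    (hgt : ∀ i, j < i → i ≤ r + 1 → T i j = Q j (i + 1) + Q j i) :
    ∑ i ∈ Finset.range (r + 2), (-1 : R) ^ i * T i j =
      (-1) ^ (j + 1) * Q j (j + 1) - (-1) ^ (r + 2) * Q j (r + 2) := by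
  rw [Finset.range_eq_Ico, ← Finset.sum_Ico_consecutive _ (Nat.zero_le j) (by omega),
    Finset.sum_eq_sum_Ico_succ_bot (by omega : 0 < j),
    Finset.sum_eq_sum_Ico_succ_bot (by omega : j < r + 2)]
  have below : ∑ i ∈ Finset.Ico 1 j, (-1 : R) ^ i * T i j =
      ∑ i ∈ Finset.Ico 1 j, (-1 : R) ^ i * (Q i (j + 1) + Q (i + 1) (j + 1)) :=
    Finset.sum_congr rfl fun i hi => by
      rw [hlt i (Finset.mem_Ico.mp hi).1 (Finset.mem_Ico.mp hi).2, add_comm]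
  have above : ∑ i ∈ Finset.Ico (j + 1) (r + 2), (-1 : R) ^ i * T i j =
      ∑ i ∈ Finset.Ico (j + 1) (r + 2), (-1 : R) ^ i * (Q j i + Q j (i + 1)) :=
    Finset.sum_congr rfl fun i hi => by
      obtain ⟨hi1, hi2⟩ := Finset.mem_Ico.mp hi
      rw [hgt i hi1 (by omega), add_comm]
  rw [below, above, sum_Ico_neg_one_pow_mul_add_succ _ hj1,
    sum_Ico_neg_one_pow_mul_add_succ _ (by omega : j + 1 ≤ r + 2), h0, hdiag]
  ring

theorem sum_diag_eq_sum_faces_add_cyclic (r : ℕ) (T Q : ℕ → ℕ → R) (cyc : ℕ → R)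
    (h0 : ∀ j, 1 ≤ j → j ≤ r + 1 → T 0 j = Q 1 (j + 1))
    (hlt : ∀ i j, 1 ≤ i → i < j → j ≤ r + 1 → T i j = Q (i + 1) (j + 1) + Q i (j + 1))
    (hdiag : ∀ j, 1 ≤ j → j ≤ r + 1 → T j j = Q j (j + 1))
    (hgt : ∀ i j, 1 ≤ j → j < i → i ≤ r + 1 → T i j = Q j (i + 1) + Q j i)
    (hcyc : ∀ j, 1 ≤ j → j ≤ r + 1 → cyc j = Q j (r + 2)) :
    ∑ j ∈ Finset.Icc 1 (r + 1), T j j =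
      (∑ i ∈ Finset.range (r + 2), (-1 : R) ^ i *
        ∑ j ∈ Finset.Icc 1 (r + 1), (-1 : R) ^ (j - 1) * T i j) +
      (-1) ^ (r + 2) * ∑ j ∈ Finset.Icc 1 (r + 1), (-1 : R) ^ (j - 1) * cyc j := by
  have swap : ∑ i ∈ Finset.range (r + 2), (-1 : R) ^ i *
      ∑ j ∈ Finset.Icc 1 (r + 1), (-1 : R) ^ (j - 1) * T i j =
      ∑ j ∈ Finset.Icc 1 (r + 1), (-1 : R) ^ (j - 1) *
        ∑ i ∈ Finset.range (r + 2), (-1 : R) ^ i * T i j := by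
    simp only [Finset.mul_sum]
    rw [Finset.sum_comm]
    exact Finset.sum_congr rfl fun j _ => Finset.sum_congr rfl fun i _ => by ring
  rw [swap, Finset.mul_sum, ← Finset.sum_add_distrib]
  refine Finset.sum_congr rfl fun j hj => ?_
  obtain ⟨hj1, hj2⟩ := Finset.mem_Icc.mp hj
  rw [sum_neg_one_pow_mul_faces_eq r Q T hj1 hj2 (h0 j hj1 hj2)
      (fun i hi hij => hlt i j hi hij hj2) (hdiag j hj1 hj2)
      (fun i hji hi => hgt i j hj1 hji hi),
    hcyc j hj1 hj2, hdiag j hj1 hj2]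
  obtain ⟨k, rfl⟩ : ∃ k, j = k + 1 := ⟨j - 1, by omega⟩
  have hsign : (-1 : R) ^ k * (-1) ^ (k + 1 + 1) = 1 := by
    rw [← pow_add, show k + (k + 1 + 1) = 2 * (k + 1) by ring, pow_mul]
    simp
  rw [Nat.add_sub_cancel]
  linear_combination (-Q (k + 1) (k + 1 + 1)) * hsign

end FaceSums

/-- Let `φ ∈ CN^r(C)` be the character of an `r`-dimensional cycle
`(S, ∂̂, T̂, ρ)` over `C`.  Then `Sφ = bψ`, where
`ψ(f⁰⊗…⊗f^{r+1}) = Σ_{j=1}^{r+1} (-1)^{j-1} T̂(ρ(f⁰)∂̂ρ(f¹)⋯ρ(fʲ)⋯∂̂ρ(f^{r+1}))`;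
in particular `Sφ` is a Hochschild coboundary. -/
theorem S_char_eq_b_psi {C : Type u} [Category.{v} C] [Preadditive C]
    [CategoryTheory.Linear ℂ C] {r : ℕ} (Z : CycleOver.{u, v, u₁, v₁} C r) :
    ∀ t : CycChain C, t.2.size = r + 3 →
      SCochain Z t = bOp (r + 1) (psiCochain Z) t := by
  intro t hs
  exact sum_diag_eq_sum_faces_add_cyclic r (fun i j => trPsi Z (t.2.composeAt i) j)
    (trPsi₂ Z t.2) (trPsi Z ((rot t).2.composeAt 0))
    (fun j _ _ => trPsi_composeAt_zero Z t.2 hs j)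
    (fun _ _ hi hij hj => trPsi_composeAt_of_lt Z t.2 hs hi hij hj)
    (fun _ hj1 hj2 => trPsi_composeAt_self Z t.2 hs hj1 hj2)
    (fun _ _ hj hji hi => trPsi_composeAt_of_gt Z t.2 hs hj hji hi)
    (fun _ hj1 hj2 => trPsi_composeAt_zero_rot Z t hs hj1 hj2)

end CFM
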